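/- arXiv:0809.0473 — 6 statements merged into one kernel-verified Lean document; each statement's English description precedes it below -/
import Mathlib

section
/- Let k ≥ 2 and let c₁, …, c_k ∈ K be pairwise distinct elements all of the same value v(c₁) = ⋯ = v(c_k) = α and with c₁ + ⋯ + c_k = 0. Then there exist indices i ≠ j such that v(c_i − c_j) = α (in particular, c_i and c_j do not lie in the same rv-ball, i.e. rv is not constant on {c₁, …, c_k}). -/
/-!
Suppose every difference `c i - c j` (`i ≠ j`) had value `< α`. Then all `c i` lie in the
rv-ball of `c₀`, so `∑ c i = k c₀ + ∑ (c i - c₀)` is dominated by `k c₀`, which has value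
`α` in equicharacteristic zero; this contradicts `∑ c i = 0`.
-/

namespace Valuation

variable {R Γ₀ ι : Type*} [CommRing R] [LinearOrderedCommGroupWithZero Γ₀] [Fintype ι]

theorem map_sum_eq_of_forall_map_sub_lt (v : Valuation R Γ₀) (c : ι → R) (t : R)
    (hcard : v (Fintype.card ι : R) = 1) (hc : ∀ i, v (c i - t) < v t) :
    v (∑ i, c i) = v t := by
  have hι : Nonempty ι := by
    rw [← Fintype.card_pos_iff, Nat.pos_iff_ne_zero]
    rintro h0
    simp [h0] at hcard
  have ht : v t ≠ 0 := ne_zero_of_lt (hc (Classical.arbitrary ι))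
  have hsplit : ∑ i, c i = (Fintype.card ι : R) * t + ∑ i, (c i - t) := by
    rw [Finset.sum_sub_distrib, Finset.sum_const, Finset.card_univ, nsmul_eq_mul]
    ring
  have hmain : v ((Fintype.card ι : R) * t) = v t := by rw [v.map_mul, hcard, one_mul]
  rw [hsplit, v.map_add_eq_of_lt_left (hmain ▸ v.map_sum_lt ht fun i _ => hc i), hmain]

end Valuation

theorem average_zero_rv_not_constant_general
    {K : Type*} [Field K] {Γ₀ : Type*} [LinearOrderedCommGroupWithZero Γ₀]
    (v : Valuation K Γ₀)
    (hchar : ∀ n : ℕ, 0 < n → v (n : K) = 1)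
    {k : ℕ} (hk : 2 ≤ k) (c : Fin k → K)
    (α : Γ₀) (hval : ∀ i, v (c i) = α)
    (hsum : ∑ i, c i = 0) :
    ∃ i j : Fin k, i ≠ j ∧ v (c i - c j) = α := by
  by_contra! h
  set z : Fin k := ⟨0, by omega⟩
  have hlt : ∀ i j, i ≠ j → v (c i - c j) < α := fun i j hij =>
    lt_of_le_of_ne (v.map_sub_le (hval i).le (hval j).le) (h i j hij)
  have hα : α ≠ 0 := ne_zero_of_lt (hlt ⟨1, by omega⟩ z (by simp [z, Fin.ext_iff]))
  have hball : ∀ i, v (c i - c z) < v (c z) := by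
    intro i
    rw [hval z]
    rcases eq_or_ne i z with rfl | hi
    · simpa using zero_lt_iff.mpr hα
    · exact hlt i z hi
  have hsum_val := v.map_sum_eq_of_forall_map_sub_lt c (c z)
    (by simpa using hchar k (by omega)) hball
  rw [hsum, v.map_zero, hval] at hsum_val
  exact hα hsum_val.symm

/-- If `c₁, …, c_k` (`k ≥ 2`) are pairwise distinct elements of the same value `α`
whose sum is `0`, then some difference `c i - c j` (`i ≠ j`) also has value `α`;
in particular `rv` is not constant on `{c₁, …, c_k}`.  (Equicharacteristic zero.) -/
theorem average_zero_rv_not_constant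
    {K : Type*} [Field K] {Γ₀ : Type*} [LinearOrderedCommGroupWithZero Γ₀]
    (v : Valuation K Γ₀)
    (hchar : ∀ n : ℕ, 0 < n → v (n : K) = 1)
    {k : ℕ} (hk : 2 ≤ k) (c : Fin k → K) (hinj : Function.Injective c)
    (α : Γ₀) (hval : ∀ i, v (c i) = α)
    (hsum : ∑ i, c i = 0) :
    ∃ i j : Fin k, i ≠ j ∧ v (c i - c j) = α :=
  average_zero_rv_not_constant_general v hchar hk c α hval hsum
end

section
/- Let F = Σ_{i=0}^{n} b_i X^i ∈ K[X] be a polynomial, let t ∈ K with v(t) ≠ 0, and set M = max_{0 ≤ i ≤ n} v(b_i · t^i). Assume that v(F(c)) < M for every c ∈ K with v(c − t) < v(t) (this expresses, in valuation-theoretic terms, that the reduction F̄ of F over the leading-term structure RV vanishes at rv(t), with the monomials omitted from F̄ having strictly smaller value on the rv-ball of t). Then F has a root b ∈ K with v(b − t) < v(t), i.e. a root b with rv(b) = rv(t). -/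
/-!
If no root `r` of `F = lc · ∏ (X - r)` lies in the rv-ball of `t`, then `v (t - r) ≥ v t`, hence
`v (t - r) ≥ max (v r) (v t)` by the ultrametric inequality. The weighted coefficient bound
`max_i v (coeff_i · t ^ i)` is submultiplicative and equals `max (v r) (v t)` on `X - r`, so
`v (F t) = v lc · ∏ v (t - r)` dominates every `v (b_i t ^ i)`, i.e. `v (F t) ≥ M`, contradicting
the hypothesis at `c = t`.
-/

open Polynomial

namespace Polynomial

variable {R Γ₀ : Type*} [CommRing R] [LinearOrderedCommMonoidWithZero Γ₀] (v : Valuation R Γ₀)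

theorem valuation_coeff_mul_mul_pow_le {p q : R[X]} {t : R} {a b : Γ₀}
    (hp : ∀ i, v (p.coeff i * t ^ i) ≤ a) (hq : ∀ i, v (q.coeff i * t ^ i) ≤ b) (i : ℕ) :
    v ((p * q).coeff i * t ^ i) ≤ a * b := by
  rw [coeff_mul, Finset.sum_mul]
  refine v.map_sum_le fun x hx => ?_
  rw [← Finset.HasAntidiagonal.mem_antidiagonal.mp hx, pow_add, mul_mul_mul_comm, v.map_mul]
  exact mul_le_mul' (hp _) (hq _)

theorem valuation_coeff_X_sub_C_mul_pow_le (r t : R) (i : ℕ) :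
    v ((X - C r).coeff i * t ^ i) ≤ max (v r) (v t) := by
  rcases i with _ | _ | i <;> simp [coeff_X, coeff_C]

theorem valuation_coeff_prod_X_sub_C_mul_pow_le (s : Multiset R) (t : R) (i : ℕ) :
    v ((s.map (X - C ·)).prod.coeff i * t ^ i) ≤ (s.map fun r => max (v r) (v t)).prod := by
  induction s using Multiset.induction_on generalizing i with
  | empty => rcases i with _ | i <;> simp [coeff_one]
  | cons r s ih =>
    simpa only [Multiset.map_cons, Multiset.prod_cons] using
      valuation_coeff_mul_mul_pow_le v (valuation_coeff_X_sub_C_mul_pow_le v r t) ih i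

theorem valuation_coeff_mul_pow_le_valuation_eval [IsDomain R] {F : R[X]} (hF : F.Splits)
    {t : R} (hroots : ∀ r ∈ F.roots, v t ≤ v (t - r)) (i : ℕ) :
    v (F.coeff i * t ^ i) ≤ v (F.eval t) := by
  have hmax : ∀ r ∈ F.roots, max (v r) (v t) ≤ v (t - r) := fun r hr =>
    max_le (by simpa using v.map_sub_le (hroots r hr) le_rfl) (hroots r hr)
  conv_rhs => rw [hF.eval_eq_prod_roots, v.map_mul, map_multiset_prod v, Multiset.map_map]
  conv_lhs => rw [hF.eq_prod_roots, coeff_C_mul, mul_assoc, v.map_mul]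
  exact mul_le_mul' le_rfl ((valuation_coeff_prod_X_sub_C_mul_pow_le v _ t i).trans
    (Multiset.prod_map_le_prod_map _ _ hmax))

end Polynomial

/-- If the "reduction" of a polynomial `F` vanishes on the rv-ball of `t`
(i.e. `v (F c) < M` for all `c` in the rv-ball of `t`, where
`M = max_i v (F.coeff i * t ^ i)`), then `F` has a root in the rv-ball of `t`. -/
theorem rv_root_lift_vf
    {K : Type*} [Field K] [IsAlgClosed K]
    {Γ₀ : Type*} [LinearOrderedCommGroupWithZero Γ₀]
    (v : Valuation K Γ₀)
    (F : Polynomial K) (t : K) (ht : v t ≠ 0)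
    (M : Γ₀)
    (hM : M = (Finset.range (F.natDegree + 1)).sup'
      (Finset.nonempty_range_iff.mpr (Nat.succ_ne_zero _))
      fun i => v (F.coeff i * t ^ i))
    (hred : ∀ c : K, v (c - t) < v t → v (F.eval c) < M) :
    ∃ b : K, v (b - t) < v t ∧ F.eval b = 0 := by
  by_contra! hno
  have hroots : ∀ r ∈ F.roots, v t ≤ v (t - r) := fun r hr => by
    by_contra! hlt
    rw [v.map_sub_swap] at hlt
    exact hno r hlt (mem_roots'.mp hr).2
  have hMle : M ≤ v (F.eval t) := hM ▸ Finset.sup'_le _ _ fun i _ =>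
    valuation_coeff_mul_pow_le_valuation_eval v (IsAlgClosed.splits F) hroots i
  exact (hred t (by simpa using zero_lt_iff.mpr ht)).not_ge hMle
end

section
/- Let e ∈ L be nonzero and n ≥ 1 with eⁿ ∈ K, and suppose that for every integer i with 0 < i < n the value v(e)^i does not equal v(x) for any nonzero x ∈ K. Then for all b₀, …, b_{n−1} ∈ K, not all zero, the values v(b_i e^i) taken over the indices i with b_i ≠ 0 are pairwise distinct; consequently v(Σ_{i<n} b_i e^i) = max_{i<n} v(b_i e^i), and there is a unique index k such that b_k ≠ 0 and v((Σ_{i<n} b_i e^i) − b_k e^k) < v(b_k e^k) (i.e. rv(Σ b_i e^i) = rv(b_k)·rv(e)^k, so the leading term of any such sum is the leading term of a single monomial). -/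
/-!
Two monomials `a eⁱ`, `b eʲ` with nonzero `a, b ∈ K` and `0 < j - i < n` cannot have the same value,
since otherwise `v(e)^(j-i) = v(a / b)`. Hence among the nonzero terms of `∑ bᵢ eⁱ` one has
strictly largest value; it dominates the rest of the sum, which gives both the value and the
rv-class of the sum. Conversely, `v(s - c) < v(c)` forces `v(c) = v(s)`, and distinctness of the
values makes the dominant index unique.
-/

namespace Valuation

section Dominant

variable {K Γ₀ ι : Type*} [DivisionRing K] [LinearOrderedCommMonoidWithZero Γ₀] [Nontrivial Γ₀]
  (v : Valuation K Γ₀) [Fintype ι] {f : ι → K}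

theorem map_sum_sub_lt_of_forall_lt {k : ι} (hk0 : f k ≠ 0) (hk : ∀ i ≠ k, v (f i) < v (f k)) :
    v (∑ i, f i - f k) < v (f k) := by
  classical
  rw [← Finset.sum_erase_eq_sub (Finset.mem_univ k)]
  exact v.map_sum_lt (v.ne_zero_iff.2 hk0) fun i hi => hk i (Finset.ne_of_mem_erase hi)

theorem exists_forall_lt_of_pairwise_ne
    (hf : ∀ i j, i ≠ j → f i ≠ 0 → f j ≠ 0 → v (f i) ≠ v (f j)) (hne : ∃ i, f i ≠ 0) :
    ∃ k, f k ≠ 0 ∧ ∀ i ≠ k, v (f i) < v (f k) := by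
  obtain ⟨i₀, hi₀⟩ := hne
  have : Nonempty ι := ⟨i₀⟩
  obtain ⟨k, hk⟩ := Finite.exists_max fun i => v (f i)
  have hk0 : f k ≠ 0 := fun h => hi₀ (by simpa [h] using hk i₀)
  refine ⟨k, hk0, fun i hik => (hk i).lt_of_ne ?_⟩
  by_cases hi : f i = 0
  · rw [hi, map_zero]
    exact (v.ne_zero_iff.2 hk0).symm
  · exact hf i k hik hi hk0

theorem map_sum_eq_sup'_of_pairwise_ne
    (hf : ∀ i j, i ≠ j → f i ≠ 0 → f j ≠ 0 → v (f i) ≠ v (f j)) (hne : ∃ i, f i ≠ 0)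
    (hι : (Finset.univ : Finset ι).Nonempty) :
    v (∑ i, f i) = Finset.univ.sup' hι fun i => v (f i) := by
  obtain ⟨k, hk0, hk⟩ := v.exists_forall_lt_of_pairwise_ne hf hne
  rw [v.map_eq_of_sub_lt (v.map_sum_sub_lt_of_forall_lt hk0 hk)]
  refine le_antisymm (Finset.le_sup' (fun i => v (f i)) (Finset.mem_univ k)) (Finset.sup'_le _ _ fun i _ => ?_)
  rcases eq_or_ne i k with rfl | hik
  exacts [le_rfl, (hk i hik).le]

theorem existsUnique_map_sum_sub_lt_of_pairwise_ne
    (hf : ∀ i j, i ≠ j → f i ≠ 0 → f j ≠ 0 → v (f i) ≠ v (f j)) (hne : ∃ i, f i ≠ 0) :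
    ∃! k, f k ≠ 0 ∧ v (∑ i, f i - f k) < v (f k) := by
  obtain ⟨k, hk0, hk⟩ := v.exists_forall_lt_of_pairwise_ne hf hne
  have hsum := v.map_sum_sub_lt_of_forall_lt hk0 hk
  refine ⟨k, ⟨hk0, hsum⟩, fun k' ⟨hk'0, hk'⟩ => ?_⟩
  by_contra hk'k
  exact hf k' k hk'k hk'0 hk0 ((v.map_eq_of_sub_lt hk').symm.trans (v.map_eq_of_sub_lt hsum))

end Dominant

variable {L Γ₀ : Type*} [Field L] [LinearOrderedCommGroupWithZero Γ₀] (v : Valuation L Γ₀)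

theorem map_mul_pow_ne_of_lt (K : Subfield L) {e : L} (he : e ≠ 0) {i j : ℕ} (hij : i < j)
    (hval : ∀ x ∈ K, x ≠ 0 → v e ^ (j - i) ≠ v x) {a b : L} (ha : a ∈ K) (hb : b ∈ K)
    (ha0 : a ≠ 0) (hb0 : b ≠ 0) : v (a * e ^ i) ≠ v (b * e ^ j) := by
  intro h
  refine hval (a / b) (K.div_mem ha hb) (div_ne_zero ha0 hb0) ?_
  have hei : v e ^ i ≠ 0 := pow_ne_zero _ (v.ne_zero_iff.2 he)
  rw [map_div₀, eq_div_iff (v.ne_zero_iff.2 hb0)]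
  refine mul_right_cancel₀ hei ?_
  calc v e ^ (j - i) * v b * v e ^ i = v b * v e ^ j := by
        rw [mul_comm _ (v b), mul_assoc, pow_sub_mul_pow _ hij.le]
    _ = v a * v e ^ i := by simpa only [map_mul, map_pow] using h.symm

end Valuation

theorem e_transcendental_monomial_values_general
    {L : Type*} [Field L] {Γ₀ : Type*} [LinearOrderedCommGroupWithZero Γ₀]
    (v : Valuation L Γ₀) (K : Subfield L)
    (e : L) (he : e ≠ 0) {n : ℕ} (hn : 1 ≤ n)
    (hval : ∀ i : ℕ, 0 < i → i < n → ∀ x ∈ K, x ≠ 0 → v e ^ i ≠ v x)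
    (b : Fin n → L) (hb : ∀ i, b i ∈ K) (hne : ∃ i, b i ≠ 0) :
    (∀ i j : Fin n, i ≠ j → b i ≠ 0 → b j ≠ 0 →
      v (b i * e ^ (i : ℕ)) ≠ v (b j * e ^ (j : ℕ))) ∧
    v (∑ i, b i * e ^ (i : ℕ)) =
      Finset.univ.sup' ⟨⟨0, hn⟩, Finset.mem_univ _⟩
        (fun i : Fin n => v (b i * e ^ (i : ℕ))) ∧
    ∃! k : Fin n, b k ≠ 0 ∧
      v ((∑ i, b i * e ^ (i : ℕ)) - b k * e ^ (k : ℕ)) < v (b k * e ^ (k : ℕ)) := by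
  have hdist : ∀ i j : Fin n, i ≠ j → b i ≠ 0 → b j ≠ 0 →
      v (b i * e ^ (i : ℕ)) ≠ v (b j * e ^ (j : ℕ)) := by
    intro i j hij hi hj
    rcases Nat.lt_or_gt_of_ne (Fin.val_ne_of_ne hij) with h | h
    · exact v.map_mul_pow_ne_of_lt K he h (hval _ (by omega) (by omega)) (hb i) (hb j) hi hj
    · exact (v.map_mul_pow_ne_of_lt K he h (hval _ (by omega) (by omega)) (hb j) (hb i) hj hi).symm
  have hterm : ∀ i : Fin n, b i * e ^ (i : ℕ) ≠ 0 ↔ b i ≠ 0 :=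
    fun i => mul_ne_zero_iff_right (pow_ne_zero _ he)
  simp_rw [← hterm] at hdist hne ⊢
  exact ⟨hdist, v.map_sum_eq_sup'_of_pairwise_ne hdist hne _,
    v.existsUnique_map_sum_sub_lt_of_pairwise_ne hdist hne⟩

/-- If `e ≠ 0`, `eⁿ ∈ K`, and no power `v(e)^i` (`0 < i < n`) is the value of a
nonzero element of `K`, then for `b₀, …, b_{n-1} ∈ K` not all zero, the values
`v (b_i e^i)` (over indices with `b_i ≠ 0`) are pairwise distinct; consequently
the value of the sum is the maximum of the values, and the sum lies in the
rv-ball of a unique monomial `b_k e^k`. -/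
theorem e_transcendental_monomial_values
    {L : Type*} [Field L] {Γ₀ : Type*} [LinearOrderedCommGroupWithZero Γ₀]
    (v : Valuation L Γ₀) (K : Subfield L)
    (e : L) (he : e ≠ 0) {n : ℕ} (hn : 1 ≤ n) (hen : e ^ n ∈ K)
    (hval : ∀ i : ℕ, 0 < i → i < n → ∀ x ∈ K, x ≠ 0 → v e ^ i ≠ v x)
    (b : Fin n → L) (hb : ∀ i, b i ∈ K) (hne : ∃ i, b i ≠ 0) :
    (∀ i j : Fin n, i ≠ j → b i ≠ 0 → b j ≠ 0 →
      v (b i * e ^ (i : ℕ)) ≠ v (b j * e ^ (j : ℕ))) ∧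
    v (∑ i, b i * e ^ (i : ℕ)) =
      Finset.univ.sup' ⟨⟨0, hn⟩, Finset.mem_univ _⟩
        (fun i : Fin n => v (b i * e ^ (i : ℕ))) ∧
    ∃! k : Fin n, b k ≠ 0 ∧
      v ((∑ i, b i * e ^ (i : ℕ)) - b k * e ^ (k : ℕ)) < v (b k * e ^ (k : ℕ)) :=
  e_transcendental_monomial_values_general v K e he hn hval b hb hne
end

section
/- Let f ∈ K[X] be a nonzero polynomial, let c ∈ K and ρ ∈ Γ₀ with ρ ≤ v(c), and let B = {x ∈ K : v(x − c) < ρ} (an open ball contained in an rv-ball). Suppose f has no root in B. Then the image f(B) is contained in a single rv-ball: for all a, b ∈ B one has v(f(a) − f(b)) < v(f(b)), i.e. rv(f(a)) = rv(f(b)), so rv ∘ f is constant on B. -/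
/-!
Over an algebraically closed field, `f = lc(f) · ∏ (X - r)` over the roots. For `a, b` in the ball
`B` and a root `r` outside it, the ultrametric inequality gives `v (a - b) < ρ ≤ v (b - r)`, so each
linear factor satisfies `rv (a - r) = rv (b - r)`; since `rv` is multiplicative, `rv (f a) = rv (f b)`.
-/

open Polynomial

namespace Valuation

variable {R Γ₀ : Type*} [CommRing R] [LinearOrderedCommGroupWithZero Γ₀] (v : Valuation R Γ₀)

theorem map_mul_sub_mul_lt {x₁ y₁ x₂ y₂ : R}
    (h₁ : v (x₁ - y₁) < v y₁) (h₂ : v (x₂ - y₂) < v y₂) :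
    v (x₁ * x₂ - y₁ * y₂) < v (y₁ * y₂) := by
  have hx₁ : v x₁ = v y₁ := v.map_eq_of_sub_lt h₁
  have hy₁ : 0 < v y₁ := zero_le.trans_lt h₁
  have hy₂ : 0 < v y₂ := zero_le.trans_lt h₂
  have hsplit : x₁ * x₂ - y₁ * y₂ = x₁ * (x₂ - y₂) + (x₁ - y₁) * y₂ := by ring
  rw [hsplit, map_mul]
  refine (v.map_add _ _).trans_lt (max_lt ?_ ?_)
  · rw [map_mul, hx₁]
    exact mul_lt_mul_of_pos_left h₂ hy₁
  · rw [map_mul]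
    exact mul_lt_mul_of_pos_right h₁ hy₂

theorem map_multiset_prod_sub_lt {ι : Type*} (s : Multiset ι) {x y : ι → R}
    (h : ∀ i ∈ s, v (x i - y i) < v (y i)) :
    v ((s.map x).prod - (s.map y).prod) < v (s.map y).prod := by
  induction s using Multiset.induction_on with
  | empty => simp
  | cons i s ih =>
    simp only [Multiset.map_cons, Multiset.prod_cons]
    exact v.map_mul_sub_mul_lt (h i (s.mem_cons_self i))
      (ih fun j hj => h j (Multiset.mem_cons_of_mem hj))

end Valuation

theorem Polynomial.Splits.valuation_eval_sub_eval_lt {K Γ₀ : Type*} [Field K]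
    [LinearOrderedCommGroupWithZero Γ₀] (v : Valuation K Γ₀) {f : K[X]} (hsplit : f.Splits)
    (hf : f ≠ 0) {a b : K} (hroots : ∀ r ∈ f.roots, v (a - b) < v (b - r)) :
    v (f.eval a - f.eval b) < v (f.eval b) := by
  have hlc : v (f.leadingCoeff - f.leadingCoeff) < v f.leadingCoeff := by
    simpa [zero_lt_iff] using leadingCoeff_ne_zero.mpr hf
  have hfactors : ∀ r ∈ f.roots, v ((a - r) - (b - r)) < v (b - r) := fun r hr => by
    simpa only [sub_sub_sub_cancel_right] using hroots r hr
  rw [hsplit.eval_eq_prod_roots a, hsplit.eval_eq_prod_roots b]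
  exact v.map_mul_sub_mul_lt hlc (v.map_multiset_prod_sub_lt _ hfactors)

theorem rv_constant_on_rootfree_ball_general
    {K : Type*} [Field K] [IsAlgClosed K]
    {Γ₀ : Type*} [LinearOrderedCommGroupWithZero Γ₀]
    (v : Valuation K Γ₀)
    (f : Polynomial K) (c : K) (ρ : Γ₀)
    (hroot : ∀ x : K, v (x - c) < ρ → Polynomial.eval x f ≠ 0) :
    ∀ a b : K, v (a - c) < ρ → v (b - c) < ρ →
      v (Polynomial.eval a f - Polynomial.eval b f) < v (Polynomial.eval b f) := by
  intro a b ha hb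
  have hf : f ≠ 0 := fun h => hroot b hb (by simp [h])
  have hab : v (a - b) < ρ := by
    rw [← sub_sub_sub_cancel_right a b c]
    exact (v.map_sub _ _).trans_lt (max_lt ha hb)
  refine (IsAlgClosed.splits f).valuation_eval_sub_eval_lt v hf fun r hr => hab.trans_le ?_
  have hrc : ρ ≤ v (r - c) := not_lt.mp fun h => hroot r h (isRoot_of_mem_roots hr)
  rw [← sub_sub_sub_cancel_right b r c, v.map_sub_eq_of_lt_right (hb.trans_le hrc)]
  exact hrc

/-- If a nonzero polynomial `f` has no root in an open ball
`B = {x : v (x - c) < ρ}` that is contained in an rv-ball (`ρ ≤ v c`), then the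
image `f(B)` is contained in a single rv-ball: `rv ∘ f` is constant on `B`. -/
theorem rv_constant_on_rootfree_ball
    {K : Type*} [Field K] [IsAlgClosed K]
    {Γ₀ : Type*} [LinearOrderedCommGroupWithZero Γ₀]
    (v : Valuation K Γ₀)
    (f : Polynomial K) (hf : f ≠ 0) (c : K) (ρ : Γ₀) (hρ : ρ ≤ v c)
    (hroot : ∀ x : K, v (x - c) < ρ → Polynomial.eval x f ≠ 0) :
    ∀ a b : K, v (a - c) < ρ → v (b - c) < ρ →
      v (Polynomial.eval a f - Polynomial.eval b f) < v (Polynomial.eval b f) :=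
  rv_constant_on_rootfree_ball_general v f c ρ hroot
end

section
/- Suppose f : A → B is a bijection that is trapezoidal in X with paradigms t₁, t₂. Then for all a, a′ ∈ A: v(a − a′) < v(t₁) if and only if v(f(a) − f(a′)) < v(t₂); moreover, for every a ∈ A, f maps {x ∈ A : v(x − a) < v(t₁)} onto the full open ball {y ∈ K : v(y − f(a)) < v(t₂)}. (In the paper's terms: f carries the maximal open subball around a of the minimal closed ball containing f⁻¹(X_a) bijectively onto the maximal open subball around f(a) of the minimal closed ball containing X_a.) -/
/-!
Fix `a ∈ A` and the pivot `c = a - t₁`, which lies in `A` with `f c ∈ X_a`. For `a' ∈ A`,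
the cofiber condition at `a'` says `f c ∈ X_{a'}` iff `v (a' - a) < v t₁`, while the fiber
condition at `a'` says `f c ∈ X_{a'}` iff `v (f a - f a') < v t₂`, because `X_{a'}` is an
rv-ball and any of its points may serve as its centre. Surjectivity onto the open ball follows
since that ball lies in `B`: it is contained in the fiber `X_b` through `f a`.
-/

theorem Valuation.sub_lt_iff_of_sub_lt {R Γ₀ : Type*} [Ring R]
    [LinearOrderedCommMonoidWithZero Γ₀] (v : Valuation R Γ₀) {u w c : R} {r : Γ₀}
    (h : v (u - c) < r) :
    v (w - c) < r ↔ v (w - u) < r := by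
  constructor
  · intro hw
    rw [← sub_sub_sub_cancel_right w u c]
    exact v.map_sub_lt hw h
  · intro hw
    rw [← sub_add_sub_cancel w u c]
    exact v.map_add_lt hw h

/-- Conditions (i) and (ii) of trapezoidality; bijectivity of `f` and `v tᵢ ≠ 0` are kept
separate. -/
structure IsTrapezoidal {K Γ₀ : Type*} [Ring K] [LinearOrderedCommMonoidWithZero Γ₀]
    (v : Valuation K Γ₀) (X : Set (K × K)) (f : K → K) (t₁ t₂ : K) : Prop where
  fiber : ∀ a ∈ Prod.fst '' X, ∀ y : K, (a, y) ∈ X ↔ v (y - f a - t₂) < v t₂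
  cofiber : ∀ a ∈ Prod.fst '' X, ∀ a' : K,
    (a' ∈ Prod.fst '' X ∧ (a, f a') ∈ X) ↔ v ((a - a') - t₁) < v t₁

namespace IsTrapezoidal

variable {K Γ₀ : Type*} [Ring K] [LinearOrderedCommMonoidWithZero Γ₀] {v : Valuation K Γ₀}
  {X : Set (K × K)} {f : K → K} {t₁ t₂ : K} {a a' : K}

theorem pivot_mem (h : IsTrapezoidal v X f t₁ t₂) (ht₁ : v t₁ ≠ 0)
    (ha : a ∈ Prod.fst '' X) :
    a - t₁ ∈ Prod.fst '' X ∧ (a, f (a - t₁)) ∈ X :=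
  (h.cofiber a ha _).2 (by rwa [sub_sub_cancel, sub_self, v.map_zero, zero_lt_iff])

theorem mem_pivot_iff_sub_lt_left (h : IsTrapezoidal v X f t₁ t₂) (ht₁ : v t₁ ≠ 0)
    (ha : a ∈ Prod.fst '' X) (ha' : a' ∈ Prod.fst '' X) :
    (a', f (a - t₁)) ∈ X ↔ v (a' - a) < v t₁ := by
  have hcof := h.cofiber a' ha' (a - t₁)
  rw [sub_sub, sub_add_cancel] at hcof
  rw [← hcof, and_iff_right (h.pivot_mem ht₁ ha).1]

theorem mem_pivot_iff_sub_lt_right (h : IsTrapezoidal v X f t₁ t₂) (ht₁ : v t₁ ≠ 0)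
    (ha : a ∈ Prod.fst '' X) (ha' : a' ∈ Prod.fst '' X) :
    (a', f (a - t₁)) ∈ X ↔ v (f a - f a') < v t₂ := by
  have hc := (h.fiber a ha _).1 (h.pivot_mem ht₁ ha).2
  rw [h.fiber a' ha', v.sub_lt_iff_of_sub_lt hc, sub_sub_sub_cancel_left]

theorem sub_lt_iff (h : IsTrapezoidal v X f t₁ t₂) (ht₁ : v t₁ ≠ 0)
    (ha : a ∈ Prod.fst '' X) (ha' : a' ∈ Prod.fst '' X) :
    v (a - a') < v t₁ ↔ v (f a - f a') < v t₂ := by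
  rw [v.map_sub_swap, ← h.mem_pivot_iff_sub_lt_left ht₁ ha ha',
    h.mem_pivot_iff_sub_lt_right ht₁ ha ha']

theorem mem_snd_of_sub_lt (h : IsTrapezoidal v X f t₁ t₂) {b z y : K} (hz : (b, z) ∈ X)
    (hy : v (y - z) < v t₂) : y ∈ Prod.snd '' X := by
  have hb : b ∈ Prod.fst '' X := ⟨_, hz, rfl⟩
  have hzb := (h.fiber b hb z).1 hz
  refine ⟨(b, y), (h.fiber b hb y).2 ?_, rfl⟩
  rwa [v.sub_lt_iff_of_sub_lt hzb, sub_sub_sub_cancel_right]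

theorem image_ball (h : IsTrapezoidal v X f t₁ t₂) (ht₁ : v t₁ ≠ 0)
    (hmaps : Set.MapsTo f (Prod.fst '' X) (Prod.snd '' X))
    (hsurj : Set.SurjOn f (Prod.fst '' X) (Prod.snd '' X)) (ha : a ∈ Prod.fst '' X) :
    f '' {x : K | x ∈ Prod.fst '' X ∧ v (x - a) < v t₁} = {y : K | v (y - f a) < v t₂} := by
  ext y
  constructor
  · rintro ⟨x, ⟨hx, hxa⟩, rfl⟩
    exact (h.sub_lt_iff ht₁ hx ha).1 hxa
  · intro hy
    obtain ⟨⟨b, z⟩, hbz, rfl : z = f a⟩ := hmaps ha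
    obtain ⟨x, hx, rfl⟩ := hsurj (h.mem_snd_of_sub_lt hbz hy)
    exact ⟨x, ⟨hx, (h.sub_lt_iff ht₁ hx ha).2 hy⟩, rfl⟩

end IsTrapezoidal

theorem trapezoidal_open_ball_correspondence_general
    {K : Type*} [Field K] {Γ₀ : Type*} [LinearOrderedCommGroupWithZero Γ₀]
    (v : Valuation K Γ₀)
    (X : Set (K × K)) (f : K → K) (t₁ t₂ : K)
    (ht₁ : v t₁ ≠ 0)
    (hbij : Set.BijOn f (Prod.fst '' X) (Prod.snd '' X))
    (hfiber : ∀ a ∈ Prod.fst '' X, ∀ y : K,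
      (a, y) ∈ X ↔ v (y - f a - t₂) < v t₂)
    (hcofiber : ∀ a ∈ Prod.fst '' X, ∀ a' : K,
      (a' ∈ Prod.fst '' X ∧ (a, f a') ∈ X) ↔ v ((a - a') - t₁) < v t₁) :
    (∀ a ∈ Prod.fst '' X, ∀ a' ∈ Prod.fst '' X,
      (v (a - a') < v t₁ ↔ v (f a - f a') < v t₂)) ∧
    (∀ a ∈ Prod.fst '' X,
      f '' {x : K | x ∈ Prod.fst '' X ∧ v (x - a) < v t₁} =
        {y : K | v (y - f a) < v t₂}) := by
  have h : IsTrapezoidal v X f t₁ t₂ := ⟨hfiber, hcofiber⟩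
  exact ⟨fun _ ha _ ha' => h.sub_lt_iff ht₁ ha ha',
    fun _ ha => h.image_ball ht₁ hbij.mapsTo hbij.surjOn ha⟩

/-- Basic properties of a trapezoidal bijection `f` in `X` with paradigms
`t₁, t₂`: for `a, a'` in the first projection `A` of `X`,
`v (a - a') < v t₁ ↔ v (f a - f a') < v t₂`, and `f` maps
`{x ∈ A : v (x - a) < v t₁}` onto the full open ball
`{y : v (y - f a) < v t₂}`. -/
theorem trapezoidal_open_ball_correspondence
    {K : Type*} [Field K] {Γ₀ : Type*} [LinearOrderedCommGroupWithZero Γ₀]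
    (v : Valuation K Γ₀)
    (X : Set (K × K)) (f : K → K) (t₁ t₂ : K)
    (ht₁ : v t₁ ≠ 0) (ht₂ : v t₂ ≠ 0)
    (hbij : Set.BijOn f (Prod.fst '' X) (Prod.snd '' X))
    (hfiber : ∀ a ∈ Prod.fst '' X, ∀ y : K,
      (a, y) ∈ X ↔ v (y - f a - t₂) < v t₂)
    (hcofiber : ∀ a ∈ Prod.fst '' X, ∀ a' : K,
      (a' ∈ Prod.fst '' X ∧ (a, f a') ∈ X) ↔ v ((a - a') - t₁) < v t₁) :
    (∀ a ∈ Prod.fst '' X, ∀ a' ∈ Prod.fst '' X,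
      (v (a - a') < v t₁ ↔ v (f a - f a') < v t₂)) ∧
    (∀ a ∈ Prod.fst '' X,
      f '' {x : K | x ∈ Prod.fst '' X ∧ v (x - a) < v t₁} =
        {y : K | v (y - f a) < v t₂}) :=
  trapezoidal_open_ball_correspondence_general v X f t₁ t₂ ht₁ hbij hfiber hcofiber
end

section
/- Let γ ∈ Γ₀ with γ ≠ 0, let m ≥ 2, and let c₁, …, c_m ∈ K satisfy v(c_i − c_j) = γ for all i ≠ j (so the open balls 𝔥_i = {x : v(x − c_i) < γ} are m pairwise distinct, hence pairwise disjoint, maximal open subballs of a common closed ball of radius γ). Then there exists an integer k with 1 ≤ k ≤ m + 1 such that v((c₁ + k·(c₂ − c₁)) − c_i) = γ for every 1 ≤ i ≤ m; i.e., the maximal open subball {x : v(x − (c₁ + k(c₂ − c₁))) < γ} is contained in the same closed ball and is disjoint from each 𝔥_i. -/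
/-!
The points `c₁ + k (c₂ - c₁)` for `k = 1, …, m + 1` lie in the closed ball of radius `γ` around
`c₁`, and in equicharacteristic zero any two of them are at distance exactly `γ`, so each open
ball `𝔥_i` contains at most one of them. Since there are `m + 1` points and only `m` balls, one
of the points avoids every `𝔥_i`.
-/

theorem Finset.exists_mem_forall_notMem_of_subsingleton {α ι : Type*} [Fintype ι]
    (s : Finset α) (t : ι → Set α) (ht : ∀ i, (t i).Subsingleton)
    (hcard : Fintype.card ι < s.card) : ∃ a ∈ s, ∀ i, a ∉ t i := by
  by_contra! hcover
  choose f hf using hcover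
  obtain ⟨a, ha, b, hb, hab, hfab⟩ :=
    Finset.exists_ne_map_eq_of_card_lt_of_maps_to (t := Finset.univ) (f := fun a => f a.1 a.2)
      (s := s.attach) (by simpa using hcard) (fun _ _ => Finset.mem_univ _)
  refine hab (Subtype.ext (ht (f a.1 a.2) (hf a.1 a.2) ?_))
  exact hfab ▸ hf b.1 b.2

namespace Valuation

variable {R Γ₀ : Type*} [Ring R] [LinearOrderedCommGroupWithZero Γ₀] (v : Valuation R Γ₀)

theorem map_natCast_sub_natCast_eq_one (hchar : ∀ n : ℕ, 0 < n → v (n : R) = 1) {k l : ℕ}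
    (hkl : k ≠ l) : v ((k : R) - l) = 1 := by
  rcases hkl.lt_or_gt with h | h
  · rw [map_sub_swap, ← Nat.cast_sub h.le]
    exact hchar _ (Nat.sub_pos_of_lt h)
  · rw [← Nat.cast_sub h.le]
    exact hchar _ (Nat.sub_pos_of_lt h)

theorem map_add_natCast_mul_sub_add_natCast_mul (hchar : ∀ n : ℕ, 0 < n → v (n : R) = 1)
    (a d : R) {k l : ℕ} (hkl : k ≠ l) : v (a + k * d - (a + l * d)) = v d := by
  rw [show a + k * d - (a + l * d) = ((k : R) - l) * d by rw [sub_mul, add_sub_add_left_eq_sub], v.map_mul,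
    v.map_natCast_sub_natCast_eq_one hchar hkl, one_mul]

theorem subsingleton_setOf_map_sub_lt {ι : Type*} (p : ι → R) {γ : Γ₀}
    (hp : ∀ k l, k ≠ l → γ ≤ v (p k - p l)) (a : R) : {k | v (p k - a) < γ}.Subsingleton := by
  intro k hk l hl
  by_contra hkl
  have hlt : v ((p k - a) - (p l - a)) < γ := v.map_sub_lt hk hl
  rw [sub_sub_sub_cancel_right] at hlt
  exact (hp k l hkl).not_gt hlt

end Valuation

/-- If `𝔥₁, …, 𝔥_m` (`m ≥ 2`) are pairwise distinct maximal open subballs, with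
centers `c₁, …, c_m` satisfying `v (c_i - c_j) = γ ≠ 0` for `i ≠ j`, of a common
closed ball of radius `γ`, then for some `1 ≤ k ≤ m + 1` the maximal open
subball centered at `c₁ + k (c₂ - c₁)` is disjoint from each `𝔥_i`
(equicharacteristic zero). -/
theorem exists_disjoint_maximal_open_subball
    {K : Type*} [Field K] {Γ₀ : Type*} [LinearOrderedCommGroupWithZero Γ₀]
    (v : Valuation K Γ₀)
    (hchar : ∀ n : ℕ, 0 < n → v (n : K) = 1)
    {m : ℕ} (hm : 2 ≤ m) (γ : Γ₀)
    (c : Fin m → K) (hdist : ∀ i j, i ≠ j → v (c i - c j) = γ) :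
    ∃ k : ℕ, 1 ≤ k ∧ k ≤ m + 1 ∧
      ∀ i : Fin m,
        v ((c ⟨0, by omega⟩ + (k : K) * (c ⟨1, by omega⟩ - c ⟨0, by omega⟩)) - c i)
          = γ := by
  set c₀ := c ⟨0, by omega⟩
  set d := c ⟨1, by omega⟩ - c₀
  have hd : v d = γ := hdist _ _ (by simp [Fin.ext_iff])
  have hclose : ∀ i, v (c₀ - c i) ≤ γ := fun i => by
    by_cases h : (⟨0, by omega⟩ : Fin m) = i
    · simp [c₀, h]
    · exact (hdist _ _ h).le
  obtain ⟨k, hk, hfar⟩ := Finset.exists_mem_forall_notMem_of_subsingleton (Finset.Icc 1 (m + 1))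
    (fun i => {k : ℕ | v (c₀ + k * d - c i) < γ})
    (fun i => v.subsingleton_setOf_map_sub_lt _
      (fun k l hkl => (v.map_add_natCast_mul_sub_add_natCast_mul hchar c₀ d hkl).trans hd |>.ge) _)
    (by simp)
  obtain ⟨hk₁, hk₂⟩ := Finset.mem_Icc.1 hk
  refine ⟨k, hk₁, hk₂, fun i => le_antisymm ?_ (not_lt.1 (hfar i))⟩
  rw [add_sub_right_comm]
  refine v.map_add_le (hclose i) ?_
  rw [v.map_mul, hchar k hk₁, hd, one_mul]
end
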